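/- arXiv:2103.13743 — 6 statements merged into one kernel-verified Lean document; each statement's English description precedes it below -/
import Mathlib

section
/- Cascaded composition preserves satisfaction: let Σ1 be a dynamical system with input in ℝ^{nd} and output in ℝ^{nz}, Σ2 a dynamical system with input in ℝ^{nz} and output in ℝ^{ny}, and let C1 = (D1, Ω1), C2 = (D2, Ω2) be assume/guarantee contracts with matching input/output spaces. If Σ1 satisfies C1 and Σ2 satisfies C2, then the cascade Σ1 ⊗ Σ2 satisfies the cascaded composition C1 ⊗ C2. -/
/-- A discrete-time signal with values in `ℝ^n`. -/
abbrev Sig (n : ℕ) := ℕ → (Fin n → ℝ)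

abbrev System (na nb : ℕ) := Sig na → Set (Sig nb)

def Satisfies {na nb : ℕ} (Sys : System na nb)
    (D : Set (Sig na)) (Ω : Set (Sig na × Sig nb)) : Prop :=
  ∀ d ∈ D, ∀ y ∈ Sys d, (d, y) ∈ Ω

/-- The cascade `Σ1 ⊗ Σ2`. -/
def SysComp {nd nz ny : ℕ} (Sys1 : System nd nz) (Sys2 : System nz ny) : System nd ny :=
  fun d => {y | ∃ z ∈ Sys1 d, y ∈ Sys2 z}

/-- The assumption set `D⊗` of `C1 ⊗ C2`. -/
def CompD {nd nz : ℕ} (D1 : Set (Sig nd)) (Ω1 : Set (Sig nd × Sig nz))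
    (D2 : Set (Sig nz)) : Set (Sig nd) :=
  {d | d ∈ D1 ∧ ∀ z : Sig nz, (d, z) ∈ Ω1 → z ∈ D2}

/-- The guarantee set `Ω⊗` of `C1 ⊗ C2`. -/
def CompΩ {nd nz ny : ℕ} (Ω1 : Set (Sig nd × Sig nz)) (Ω2 : Set (Sig nz × Sig ny)) :
    Set (Sig nd × Sig ny) :=
  {p | ∃ z : Sig nz, (p.1, z) ∈ Ω1 ∧ (z, p.2) ∈ Ω2}

/-- Cascaded composition preserves satisfaction: if `Σ1 ⊨ C1` and `Σ2 ⊨ C2`, then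
`Σ1 ⊗ Σ2 ⊨ C1 ⊗ C2`. -/
theorem cascade_satisfies {nd nz ny : ℕ}
    (Sys1 : System nd nz) (Sys2 : System nz ny)
    (D1 : Set (Sig nd)) (Ω1 : Set (Sig nd × Sig nz))
    (D2 : Set (Sig nz)) (Ω2 : Set (Sig nz × Sig ny))
    (h1 : Satisfies Sys1 D1 Ω1) (h2 : Satisfies Sys2 D2 Ω2) :
    Satisfies (SysComp Sys1 Sys2) (CompD D1 Ω1 D2) (CompΩ Ω1 Ω2) := by
  rintro d ⟨hd1, hD2⟩ y ⟨z, hz, hy⟩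
  have hdz : (d, z) ∈ Ω1 := h1 d hd1 z hz
  -- the assumption `D⊗` is exactly what puts the intermediate signal `z` into `D2`
  exact ⟨z, hdz, h2 z (hD2 z hdz) y hy⟩
end

section
/- Let C1 = (D1, Ω1), C2 = (D2, Ω2) and C = (D, Ω) be linear contracts defined by the data (𝔄¹, 𝔄⁰, 𝔞⁰, 𝔊¹, 𝔊⁰, 𝔤⁰), (𝔅¹, 𝔅⁰, 𝔟⁰, ℌ¹, ℌ⁰, 𝔥⁰) and (ℭ¹, ℭ⁰, 𝔠⁰, 𝔍¹, 𝔍⁰, 𝔧⁰) respectively, where C1 has input in S^{nd} and output in S^{nz}, C2 has input in S^{nz} and output in S^{ny}, and C has input in S^{nd} and output in S^{ny}. Write 𝔊^i = [𝔊^i_d, 𝔊^i_z] and ℌ^i = [ℌ^i_z, ℌ^i_y] for i = 0, 1 (block decompositions according to the splitting of the input/output variables). Assume that the triple (ℭ¹, ℭ⁰, 𝔠⁰) is extendable, that the stacked triple ([[ℭ¹, 0], [𝔊¹_d, 𝔊¹_z]], [[ℭ⁰, 0], [𝔊⁰_d, 𝔊⁰_z]], [𝔠⁰; 𝔤⁰])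 is extendable, and that the stacked triple ([[ℭ¹, 0, 0], [𝔊¹_d, 𝔊¹_z, 0], [0, ℌ¹_z, ℌ¹_y]], [[ℭ⁰, 0, 0], [𝔊⁰_d, 𝔊⁰_z, 0], [0, ℌ⁰_z, ℌ⁰_y]], [𝔠⁰; 𝔤⁰; 𝔥⁰]) is extendable. Then C1 ⊗ C2 refines C if and only if the following three implications hold for all vectors d0, d1 ∈ ℝ^{nd}, z0, z1 ∈ ℝ^{nz}, y0, y1 ∈ ℝ^{ny}: (i) if ℭ¹d1 + ℭ⁰d0 ≤ 𝔠⁰ then 𝔄¹d1 + 𝔄⁰d0 ≤ 𝔞⁰; (ii) if ℭ¹d1 + ℭ⁰d0 ≤ 𝔠⁰ and 𝔊¹[d1; z1] + 𝔊⁰[d0; z0] ≤ 𝔤⁰ then 𝔅¹z1 + 𝔅⁰z0 ≤ 𝔟⁰; (iii) if ℭ¹d1 + ℭ⁰d0 ≤ 𝔠⁰, 𝔊¹[d1; z1] + 𝔊⁰[d0; z0] ≤ 𝔤⁰ and ℌ¹[z1; y1] + ℌ⁰[z0; y0] ≤ 𝔥⁰ then 𝔍¹[d1; y1] + 𝔍⁰[d0;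 y0] ≤ 𝔧⁰. -/
/-!
Every constraint involved, in the contracts and in the refinement, only relates two consecutive
samples `(u k, u (k + 1))` of a signal. The three implications therefore give the refinement by
applying them at each time `k`. Conversely, extendability lets any feasible window `(u0, u1)` be
continued, one sample at a time, into an infinite feasible signal. Doing this for the stacked
triples produces signals `d`, `(d, z)` and `(d, z, y)` that satisfy the contracts' constraints
at all times; the refinement then applies to them, and reading it off at time `0` gives the
three implications.
-/

open Matrix

/-- The assumption set of a linear contract:
`{d : V¹ d(k+1) + V⁰ d(k) ≤ v⁰ for all k}` (entry-wise inequality). -/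
def LinAssump {s n : ℕ} (V1 V0 : Matrix (Fin s) (Fin n) ℝ) (v0 : Fin s → ℝ) :
    Set (Sig n) :=
  {d | ∀ k : ℕ, V1 *ᵥ d (k + 1) + V0 *ᵥ d k ≤ v0}

/-- The guarantee set of a linear contract:
`{(d, y) : W¹ [d(k+1); y(k+1)] + W⁰ [d(k); y(k)] ≤ w⁰ for all k}`, where the stacked
vector `[d; y]` is encoded as `Sum.elim d y : Fin na ⊕ Fin nb → ℝ`. -/
def LinGuar {s na nb : ℕ} (W1 W0 : Matrix (Fin s) (Fin na ⊕ Fin nb) ℝ) (w0 : Fin s → ℝ) :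
    Set (Sig na × Sig nb) :=
  {p | ∀ k : ℕ,
    W1 *ᵥ Sum.elim (p.1 (k + 1)) (p.2 (k + 1)) + W0 *ᵥ Sum.elim (p.1 k) (p.2 k) ≤ w0}

/-- A triple `(V¹, V⁰, v⁰)` is extendable if any one-step-feasible pair `(u0, u1)` can be
continued one more step. -/
def Extendable {m n : Type*} [Fintype n] (V1 V0 : Matrix m n ℝ) (v0 : m → ℝ) : Prop :=
  ∀ u0 u1 : n → ℝ, V1 *ᵥ u1 + V0 *ᵥ u0 ≤ v0 → ∃ u2 : n → ℝ, V1 *ᵥ u2 + V0 *ᵥ u1 ≤ v0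

/-- The stacked matrix `[[ℭ, 0], [𝔊_d, 𝔊_z]]`, where the block decomposition
`𝔊 = [𝔊_d, 𝔊_z]` corresponds to the `Sum`-indexed columns of `G`. -/
def Stack2 {sC sG nd nz : ℕ} (C : Matrix (Fin sC) (Fin nd) ℝ)
    (G : Matrix (Fin sG) (Fin nd ⊕ Fin nz) ℝ) :
    Matrix (Fin sC ⊕ Fin sG) (Fin nd ⊕ Fin nz) ℝ :=
  Matrix.of (Sum.elim (fun i => Sum.elim (C i) (fun _ => 0)) (fun i => G i))

/-- The stacked matrix `[[ℭ, 0, 0], [𝔊_d, 𝔊_z, 0], [0, ℌ_z, ℌ_y]]`, where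
`𝔊 = [𝔊_d, 𝔊_z]` and `ℌ = [ℌ_z, ℌ_y]` correspond to the `Sum`-indexed columns of
`G` and `H`. -/
def Stack3 {sC sG sH nd nz ny : ℕ} (C : Matrix (Fin sC) (Fin nd) ℝ)
    (G : Matrix (Fin sG) (Fin nd ⊕ Fin nz) ℝ)
    (H : Matrix (Fin sH) (Fin nz ⊕ Fin ny) ℝ) :
    Matrix (Fin sC ⊕ Fin sG ⊕ Fin sH) (Fin nd ⊕ Fin nz ⊕ Fin ny) ℝ :=
  Matrix.of (Sum.elim
    (fun i => Sum.elim (C i) (fun _ => 0))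
    (Sum.elim
      (fun i => Sum.elim (fun j => G i (Sum.inl j))
        (Sum.elim (fun j => G i (Sum.inr j)) (fun _ => 0)))
      (fun i => Sum.elim (fun _ => 0) (H i))))

def IsTrajectory {m n : Type*} [Fintype n] (V1 V0 : Matrix m n ℝ) (v0 : m → ℝ)
    (u : ℕ → n → ℝ) : Prop :=
  ∀ k, V1 *ᵥ u (k + 1) + V0 *ᵥ u k ≤ v0

namespace Extendable

variable {m n : Type*} [Fintype n] {V1 V0 : Matrix m n ℝ} {v0 : m → ℝ}

theorem exists_isTrajectory (hext : Extendable V1 V0 v0) {u0 u1 : n → ℝ}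
    (h : V1 *ᵥ u1 + V0 *ᵥ u0 ≤ v0) :
    ∃ u, IsTrajectory V1 V0 v0 u ∧ u 0 = u0 ∧ u 1 = u1 := by
  let window : ℕ → {p : (n → ℝ) × (n → ℝ) // V1 *ᵥ p.2 + V0 *ᵥ p.1 ≤ v0} :=
    Nat.rec ⟨(u0, u1), h⟩ fun _ p =>
      ⟨(p.1.2, (hext _ _ p.2).choose), (hext _ _ p.2).choose_spec⟩
  exact ⟨fun k => (window k).1.1, fun k => (window k).2, rfl, rfl⟩

theorem step_of_isTrajectory (hext : Extendable V1 V0 v0) {P : (n → ℝ) → (n → ℝ) → Prop}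
    (hP : ∀ u, IsTrajectory V1 V0 v0 u → P (u 0) (u 1))
    {u0 u1 : n → ℝ} (h : V1 *ᵥ u1 + V0 *ᵥ u0 ≤ v0) : P u0 u1 := by
  obtain ⟨u, hu, rfl, rfl⟩ := hext.exists_isTrajectory h
  exact hP u hu

end Extendable

section Stack

variable {sC sG sH nd nz ny : ℕ} {C C1 C0 : Matrix (Fin sC) (Fin nd) ℝ}
  {G G1 G0 : Matrix (Fin sG) (Fin nd ⊕ Fin nz) ℝ} {H H1 H0 : Matrix (Fin sH) (Fin nz ⊕ Fin ny) ℝ}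
  {c0 : Fin sC → ℝ} {g0 : Fin sG → ℝ} {h0 : Fin sH → ℝ}

theorem stack2_mulVec (u : Fin nd ⊕ Fin nz → ℝ) :
    Stack2 C G *ᵥ u = Sum.elim (C *ᵥ (u ∘ Sum.inl)) (G *ᵥ u) := by
  ext (i | i)
  · simp [Stack2, mulVec, dotProduct, Fintype.sum_sum_type]
  · rfl

theorem stack3_mulVec (u : Fin nd ⊕ Fin nz ⊕ Fin ny → ℝ) :
    Stack3 C G H *ᵥ u = Sum.elim (C *ᵥ (u ∘ Sum.inl))
      (Sum.elim (G *ᵥ Sum.elim (u ∘ Sum.inl) (u ∘ Sum.inr ∘ Sum.inl)) (H *ᵥ (u ∘ Sum.inr))) := by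
  ext (i | i | i) <;> simp [Stack3, mulVec, dotProduct, Fintype.sum_sum_type]

theorem stack2_step_le_iff (u0 u1 : Fin nd ⊕ Fin nz → ℝ) :
    Stack2 C1 G1 *ᵥ u1 + Stack2 C0 G0 *ᵥ u0 ≤ Sum.elim c0 g0 ↔
      C1 *ᵥ (u1 ∘ Sum.inl) + C0 *ᵥ (u0 ∘ Sum.inl) ≤ c0 ∧ G1 *ᵥ u1 + G0 *ᵥ u0 ≤ g0 := by
  rw [stack2_mulVec, stack2_mulVec, ← Sum.elim_add_add, Sum.elim_le_elim_iff]

theorem stack3_step_le_iff (u0 u1 : Fin nd ⊕ Fin nz ⊕ Fin ny → ℝ) :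
    Stack3 C1 G1 H1 *ᵥ u1 + Stack3 C0 G0 H0 *ᵥ u0 ≤ Sum.elim c0 (Sum.elim g0 h0) ↔
      C1 *ᵥ (u1 ∘ Sum.inl) + C0 *ᵥ (u0 ∘ Sum.inl) ≤ c0 ∧
      G1 *ᵥ Sum.elim (u1 ∘ Sum.inl) (u1 ∘ Sum.inr ∘ Sum.inl) +
        G0 *ᵥ Sum.elim (u0 ∘ Sum.inl) (u0 ∘ Sum.inr ∘ Sum.inl) ≤ g0 ∧
      H1 *ᵥ (u1 ∘ Sum.inr) + H0 *ᵥ (u0 ∘ Sum.inr) ≤ h0 := by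
  rw [stack3_mulVec, stack3_mulVec, ← Sum.elim_add_add, ← Sum.elim_add_add, Sum.elim_le_elim_iff,
    Sum.elim_le_elim_iff]

theorem isTrajectory_stack2_iff (w : ℕ → Fin nd ⊕ Fin nz → ℝ) :
    IsTrajectory (Stack2 C1 G1) (Stack2 C0 G0) (Sum.elim c0 g0) w ↔
      (fun k => w k ∘ Sum.inl) ∈ LinAssump C1 C0 c0 ∧
      (fun k => w k ∘ Sum.inl, fun k => w k ∘ Sum.inr) ∈ LinGuar G1 G0 g0 := by
  simp only [IsTrajectory, LinAssump, LinGuar, Set.mem_ofPred_eq, stack2_step_le_iff,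
    Sum.elim_comp_inl_inr, forall_and]

theorem isTrajectory_stack3_iff (w : ℕ → Fin nd ⊕ Fin nz ⊕ Fin ny → ℝ) :
    IsTrajectory (Stack3 C1 G1 H1) (Stack3 C0 G0 H0) (Sum.elim c0 (Sum.elim g0 h0)) w ↔
      (fun k => w k ∘ Sum.inl) ∈ LinAssump C1 C0 c0 ∧
      (fun k => w k ∘ Sum.inl, fun k => w k ∘ Sum.inr ∘ Sum.inl) ∈ LinGuar G1 G0 g0 ∧
      (fun k => w k ∘ Sum.inr ∘ Sum.inl, fun k => w k ∘ Sum.inr ∘ Sum.inr) ∈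
        LinGuar H1 H0 h0 := by
  simp only [IsTrajectory, LinAssump, LinGuar, Set.mem_ofPred_eq, stack3_step_le_iff,
    ← Function.comp_assoc, Sum.elim_comp_inl_inr, forall_and]

end Stack

/-- Theorem 1 (compositional refinement): under the extendability assumptions,
`C1 ⊗ C2 ≼ C` if and only if the three vector-inequality implications hold. -/
theorem compositional_refinement_iff {nd nz ny sA sG sB sH sC sJ : ℕ}
    (A1 A0 : Matrix (Fin sA) (Fin nd) ℝ) (a0 : Fin sA → ℝ)
    (G1 G0 : Matrix (Fin sG) (Fin nd ⊕ Fin nz) ℝ) (g0 : Fin sG → ℝ)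
    (B1 B0 : Matrix (Fin sB) (Fin nz) ℝ) (b0 : Fin sB → ℝ)
    (H1 H0 : Matrix (Fin sH) (Fin nz ⊕ Fin ny) ℝ) (h0 : Fin sH → ℝ)
    (Cc1 Cc0 : Matrix (Fin sC) (Fin nd) ℝ) (c0 : Fin sC → ℝ)
    (J1 J0 : Matrix (Fin sJ) (Fin nd ⊕ Fin ny) ℝ) (j0 : Fin sJ → ℝ)
    (hext1 : Extendable Cc1 Cc0 c0)
    (hext2 : Extendable (Stack2 Cc1 G1) (Stack2 Cc0 G0) (Sum.elim c0 g0))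
    (hext3 : Extendable (Stack3 Cc1 G1 H1) (Stack3 Cc0 G0 H0)
      (Sum.elim c0 (Sum.elim g0 h0))) :
    (LinAssump Cc1 Cc0 c0 ⊆
        CompD (LinAssump A1 A0 a0) (LinGuar G1 G0 g0) (LinAssump B1 B0 b0) ∧
      CompΩ (LinGuar G1 G0 g0) (LinGuar H1 H0 h0)
          ∩ (LinAssump Cc1 Cc0 c0 ×ˢ (Set.univ : Set (Sig ny))) ⊆
        LinGuar J1 J0 j0 ∩ (LinAssump Cc1 Cc0 c0 ×ˢ (Set.univ : Set (Sig ny)))) ↔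
    ((∀ d0 d1 : Fin nd → ℝ,
        Cc1 *ᵥ d1 + Cc0 *ᵥ d0 ≤ c0 → A1 *ᵥ d1 + A0 *ᵥ d0 ≤ a0) ∧
     (∀ (d0 d1 : Fin nd → ℝ) (z0 z1 : Fin nz → ℝ),
        Cc1 *ᵥ d1 + Cc0 *ᵥ d0 ≤ c0 →
        G1 *ᵥ Sum.elim d1 z1 + G0 *ᵥ Sum.elim d0 z0 ≤ g0 →
        B1 *ᵥ z1 + B0 *ᵥ z0 ≤ b0) ∧
     (∀ (d0 d1 : Fin nd → ℝ) (z0 z1 : Fin nz → ℝ) (y0 y1 : Fin ny → ℝ),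
        Cc1 *ᵥ d1 + Cc0 *ᵥ d0 ≤ c0 →
        G1 *ᵥ Sum.elim d1 z1 + G0 *ᵥ Sum.elim d0 z0 ≤ g0 →
        H1 *ᵥ Sum.elim z1 y1 + H0 *ᵥ Sum.elim z0 y0 ≤ h0 →
        J1 *ᵥ Sum.elim d1 y1 + J0 *ᵥ Sum.elim d0 y0 ≤ j0)) := by
  constructor
  · rintro ⟨hD, hΩ⟩
    refine ⟨fun d0 d1 hc => ?_, fun d0 d1 z0 z1 hc hg => ?_,
      fun d0 d1 z0 z1 y0 y1 hc hg hh => ?_⟩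
    · exact hext1.step_of_isTrajectory (P := fun d0 d1 => A1 *ᵥ d1 + A0 *ᵥ d0 ≤ a0)
        (fun d hd => (hD hd).1 0) hc
    · refine hext2.step_of_isTrajectory
        (P := fun w0 w1 => B1 *ᵥ (w1 ∘ Sum.inr) + B0 *ᵥ (w0 ∘ Sum.inr) ≤ b0) (fun w hw => ?_)
        ((stack2_step_le_iff (Sum.elim d0 z0) (Sum.elim d1 z1)).2 ⟨hc, hg⟩)
      obtain ⟨hd, hdz⟩ := (isTrajectory_stack2_iff w).1 hw
      exact (hD hd).2 _ hdz 0
    · refine hext3.step_of_isTrajectory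
        (P := fun w0 w1 => J1 *ᵥ Sum.elim (w1 ∘ Sum.inl) (w1 ∘ Sum.inr ∘ Sum.inr) +
          J0 *ᵥ Sum.elim (w0 ∘ Sum.inl) (w0 ∘ Sum.inr ∘ Sum.inr) ≤ j0) (fun w hw => ?_)
        ((stack3_step_le_iff (Sum.elim d0 (Sum.elim z0 y0)) (Sum.elim d1 (Sum.elim z1 y1))).2
          ⟨hc, hg, hh⟩)
      obtain ⟨hd, hdz, hzy⟩ := (isTrajectory_stack3_iff w).1 hw
      exact (hΩ (a := (_, _)) ⟨⟨_, hdz, hzy⟩, hd, trivial⟩).1 0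
  · rintro ⟨h1, h2, h3⟩
    refine ⟨fun d hd => ⟨fun k => h1 _ _ (hd k), fun z hz k => h2 _ _ _ _ (hd k) (hz k)⟩, ?_⟩
    rintro ⟨d, y⟩ ⟨⟨z, hdz, hzy⟩, hd, -⟩
    exact ⟨fun k => h3 _ _ _ _ _ _ (hd k) (hdz k) (hzy k), hd, trivial⟩
end

section
/- Forward direction for assumptions, no extendability needed: let C1 = (D1, Ω1), C2 = (D2, Ω2), C = (D, Ω) be linear contracts defined by the data (𝔄¹, 𝔄⁰, 𝔞⁰, 𝔊¹, 𝔊⁰, 𝔤⁰), (𝔅¹, 𝔅⁰, 𝔟⁰, ℌ¹, ℌ⁰, 𝔥⁰) and (ℭ¹, ℭ⁰, 𝔠⁰, 𝔍¹, 𝔍⁰, 𝔧⁰). Suppose the following two implications hold for all vectors d0, d1 ∈ ℝ^{nd}, z0, z1 ∈ ℝ^{nz}: (i) if ℭ¹d1 + ℭ⁰d0 ≤ 𝔠⁰ then 𝔄¹d1 + 𝔄⁰d0 ≤ 𝔞⁰; (ii) if ℭ¹d1 + ℭ⁰d0 ≤ 𝔠⁰ and 𝔊¹[d1; z1] + 𝔊⁰[d0;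 z0] ≤ 𝔤⁰ then 𝔅¹z1 + 𝔅⁰z0 ≤ 𝔟⁰. Then D ⊆ D⊗, where D⊗ is the assumption set of the cascaded composition C1 ⊗ C2. -/
open Matrix

theorem assumptions_subset_of_implications_general {nd nz sA sG sB sC : ℕ}
    (A1 A0 : Matrix (Fin sA) (Fin nd) ℝ) (a0 : Fin sA → ℝ)
    (G1 G0 : Matrix (Fin sG) (Fin nd ⊕ Fin nz) ℝ) (g0 : Fin sG → ℝ)
    (B1 B0 : Matrix (Fin sB) (Fin nz) ℝ) (b0 : Fin sB → ℝ)
    (Cc1 Cc0 : Matrix (Fin sC) (Fin nd) ℝ) (c0 : Fin sC → ℝ)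
    (himp1 : ∀ d0 d1 : Fin nd → ℝ,
      Cc1 *ᵥ d1 + Cc0 *ᵥ d0 ≤ c0 → A1 *ᵥ d1 + A0 *ᵥ d0 ≤ a0)
    (himp2 : ∀ (d0 d1 : Fin nd → ℝ) (z0 z1 : Fin nz → ℝ),
      Cc1 *ᵥ d1 + Cc0 *ᵥ d0 ≤ c0 →
      G1 *ᵥ Sum.elim d1 z1 + G0 *ᵥ Sum.elim d0 z0 ≤ g0 →
      B1 *ᵥ z1 + B0 *ᵥ z0 ≤ b0) :
    LinAssump Cc1 Cc0 c0 ⊆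
      CompD (LinAssump A1 A0 a0) (LinGuar G1 G0 g0) (LinAssump B1 B0 b0) := by
  intro d hd
  exact ⟨fun k => himp1 _ _ (hd k), fun z hz k => himp2 _ _ _ _ (hd k) (hz k)⟩

/-- Forward direction for assumptions (no extendability needed): the two vector
implications yield `D ⊆ D⊗`. -/
theorem assumptions_subset_of_implications {nd nz ny sA sG sB sH sC : ℕ}
    (A1 A0 : Matrix (Fin sA) (Fin nd) ℝ) (a0 : Fin sA → ℝ)
    (G1 G0 : Matrix (Fin sG) (Fin nd ⊕ Fin nz) ℝ) (g0 : Fin sG → ℝ)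
    (B1 B0 : Matrix (Fin sB) (Fin nz) ℝ) (b0 : Fin sB → ℝ)
    (H1 H0 : Matrix (Fin sH) (Fin nz ⊕ Fin ny) ℝ) (h0 : Fin sH → ℝ)
    (Cc1 Cc0 : Matrix (Fin sC) (Fin nd) ℝ) (c0 : Fin sC → ℝ)
    (himp1 : ∀ d0 d1 : Fin nd → ℝ,
      Cc1 *ᵥ d1 + Cc0 *ᵥ d0 ≤ c0 → A1 *ᵥ d1 + A0 *ᵥ d0 ≤ a0)
    (himp2 : ∀ (d0 d1 : Fin nd → ℝ) (z0 z1 : Fin nz → ℝ),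
      Cc1 *ᵥ d1 + Cc0 *ᵥ d0 ≤ c0 →
      G1 *ᵥ Sum.elim d1 z1 + G0 *ᵥ Sum.elim d0 z0 ≤ g0 →
      B1 *ᵥ z1 + B0 *ᵥ z0 ≤ b0) :
    LinAssump Cc1 Cc0 c0 ⊆
      CompD (LinAssump A1 A0 a0) (LinGuar G1 G0 g0) (LinAssump B1 B0 b0) :=
  assumptions_subset_of_implications_general A1 A0 a0 G1 G0 g0 B1 B0 b0 Cc1 Cc0 c0 himp1 himp2
end

section
/- Forward direction for guarantees, no extendability needed: let C1 = (D1, Ω1), C2 = (D2, Ω2), C = (D, Ω) be linear contracts defined by the data (𝔄¹, 𝔄⁰, 𝔞⁰, 𝔊¹, 𝔊⁰, 𝔤⁰), (𝔅¹, 𝔅⁰, 𝔟⁰, ℌ¹, ℌ⁰, 𝔥⁰) and (ℭ¹, ℭ⁰, 𝔠⁰, 𝔍¹, 𝔍⁰, 𝔧⁰). Suppose the following implication holds for all vectors d0, d1 ∈ ℝ^{nd}, z0, z1 ∈ ℝ^{nz}, y0, y1 ∈ ℝ^{ny}: if ℭ¹d1 + ℭ⁰d0 ≤ 𝔠⁰,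 𝔊¹[d1; z1] + 𝔊⁰[d0; z0] ≤ 𝔤⁰ and ℌ¹[z1; y1] + ℌ⁰[z0; y0] ≤ 𝔥⁰, then 𝔍¹[d1; y1] + 𝔍⁰[d0; y0] ≤ 𝔧⁰. Then Ω⊗ ∩ (D × S^{ny}) ⊆ Ω ∩ (D × S^{ny}), where Ω⊗ is the guarantee set of the cascaded composition C1 ⊗ C2. -/
open Matrix

/-- Forward direction for guarantees (no extendability needed): the third vector
implication yields `Ω⊗ ∩ (D × S^{ny}) ⊆ Ω ∩ (D × S^{ny})`. -/
theorem guarantees_subset_of_implication {nd nz ny sG sH sC sJ : ℕ}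
    (G1 G0 : Matrix (Fin sG) (Fin nd ⊕ Fin nz) ℝ) (g0 : Fin sG → ℝ)
    (H1 H0 : Matrix (Fin sH) (Fin nz ⊕ Fin ny) ℝ) (h0 : Fin sH → ℝ)
    (Cc1 Cc0 : Matrix (Fin sC) (Fin nd) ℝ) (c0 : Fin sC → ℝ)
    (J1 J0 : Matrix (Fin sJ) (Fin nd ⊕ Fin ny) ℝ) (j0 : Fin sJ → ℝ)
    (himp : ∀ (d0 d1 : Fin nd → ℝ) (z0 z1 : Fin nz → ℝ) (y0 y1 : Fin ny → ℝ),
      Cc1 *ᵥ d1 + Cc0 *ᵥ d0 ≤ c0 →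
      G1 *ᵥ Sum.elim d1 z1 + G0 *ᵥ Sum.elim d0 z0 ≤ g0 →
      H1 *ᵥ Sum.elim z1 y1 + H0 *ᵥ Sum.elim z0 y0 ≤ h0 →
      J1 *ᵥ Sum.elim d1 y1 + J0 *ᵥ Sum.elim d0 y0 ≤ j0) :
    CompΩ (LinGuar G1 G0 g0) (LinGuar H1 H0 h0)
        ∩ (LinAssump Cc1 Cc0 c0 ×ˢ (Set.univ : Set (Sig ny))) ⊆
      LinGuar J1 J0 j0 ∩ (LinAssump Cc1 Cc0 c0 ×ˢ (Set.univ : Set (Sig ny))) := by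
  rintro ⟨d, y⟩ ⟨⟨z, hG, hH⟩, hD, -⟩
  exact ⟨fun k => himp _ _ _ _ _ _ (hD k) (hG k) (hH k), hD, Set.mem_univ y⟩
end

section
/- Optimization-based characterization of compositional refinement (Proposition 3, implication form): under the assumptions of the main theorem (the triples (ℭ¹, ℭ⁰, 𝔠⁰), ([[ℭ¹, 0], [𝔊¹_d, 𝔊¹_z]], [[ℭ⁰, 0], [𝔊⁰_d, 𝔊⁰_z]], [𝔠⁰; 𝔤⁰]) and ([[ℭ¹, 0, 0], [𝔊¹_d, 𝔊¹_z, 0], [0, ℌ¹_z, ℌ¹_y]], [[ℭ⁰, 0, 0], [𝔊⁰_d, 𝔊⁰_z, 0], [0, ℌ⁰_z, ℌ⁰_y]], [𝔠⁰; 𝔤⁰; 𝔥⁰]) are extendable), the refinement C1 ⊗ C2 ≼ C holds if and only if all three of the following hold: (a) for every (d0, d1) with ℭ¹d1 + ℭ⁰d0 ≤ 𝔠⁰ and every row index j, e_jᵀ(𝔄¹d1 + 𝔄⁰d0 − 𝔞⁰) ≤ 0; (b) for every (d0, d1, z0, z1) with ℭ¹d1 + ℭ⁰d0 ≤ 𝔠⁰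 and 𝔊¹[d1; z1] + 𝔊⁰[d0; z0] ≤ 𝔤⁰, and every row index j, e_jᵀ(𝔅¹z1 + 𝔅⁰z0 − 𝔟⁰) ≤ 0; (c) for every (d0, d1, z0, z1, y0, y1) with ℭ¹d1 + ℭ⁰d0 ≤ 𝔠⁰, 𝔊¹[d1; z1] + 𝔊⁰[d0; z0] ≤ 𝔤⁰ and ℌ¹[z1; y1] + ℌ⁰[z0; y0] ≤ 𝔥⁰, and every row index j, e_jᵀ(𝔍¹[d1; y1] + 𝔍⁰[d0; y0] − 𝔧⁰) ≤ 0. Here e_j denotes the j-th standard basis vector. -/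
/-!
A refinement between linear contracts is a family of implications between linear inequalities
on pairs of consecutive samples of signals. Such a stepwise implication holds for all signals
iff it holds for a single step, as soon as every feasible step of the hypotheses can be
continued forever: this is what extendability of the stacked constraint systems provides, so a
one-step counterexample extends to a counterexample signal. The row-wise conditions are the
entry-wise reading of the one-step inequalities.
-/

open Matrix

section StepRelation

variable {α : Type*} {P Q : α → α → Prop}

theorem exists_seq_of_forall_exists_rel (hP : ∀ a b, P a b → ∃ c, P b c) {a b : α}
    (hab : P a b) : ∃ u : ℕ → α, u 0 = a ∧ u 1 = b ∧ ∀ k, P (u k) (u (k + 1)) := by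
  choose next hnext using hP
  let step : {p : α × α // P p.1 p.2} → {p : α × α // P p.1 p.2} :=
    fun p => ⟨(p.1.2, next _ _ p.2), hnext _ _ p.2⟩
  let pairs : ℕ → {p : α × α // P p.1 p.2} := fun k => step^[k] ⟨(a, b), hab⟩
  have hshift (k : ℕ) : (pairs (k + 1)).1.1 = (pairs k).1.2 := by
    simp only [pairs, Function.iterate_succ_apply']
    rfl
  refine ⟨fun k => (pairs k).1.1, rfl, hshift 0, fun k => ?_⟩
  simpa only [hshift] using (pairs k).2

theorem forall_seq_rel_imp_iff (hP : ∀ a b, P a b → ∃ c, P b c) :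
    (∀ u : ℕ → α, (∀ k, P (u k) (u (k + 1))) → ∀ k, Q (u k) (u (k + 1))) ↔
      ∀ a b, P a b → Q a b := by
  refine ⟨fun h a b hab => ?_, fun h u hu k => h _ _ (hu k)⟩
  obtain ⟨u, rfl, rfl, hu⟩ := exists_seq_of_forall_exists_rel hP hab
  exact h u hu 0

end StepRelation

theorem forall_single_one_dotProduct_sub_nonpos_iff {ι R : Type*} [Fintype ι] [DecidableEq ι]
    [Ring R] [PartialOrder R] [IsOrderedAddMonoid R] {w v : ι → R} :
    (∀ j, Pi.single j (1 : R) ⬝ᵥ (w - v) ≤ 0) ↔ w ≤ v := by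
  simp only [single_one_dotProduct, Pi.sub_apply, sub_nonpos, Pi.le_def]

theorem stack2_mulVec_sumElim {sC sG nd nz : ℕ} (C : Matrix (Fin sC) (Fin nd) ℝ)
    (G : Matrix (Fin sG) (Fin nd ⊕ Fin nz) ℝ) (d : Fin nd → ℝ) (z : Fin nz → ℝ) :
    Stack2 C G *ᵥ Sum.elim d z = Sum.elim (C *ᵥ d) (G *ᵥ Sum.elim d z) := by
  ext (i | i) <;> simp [Stack2, mulVec, dotProduct, Fintype.sum_sum_type]

theorem stack3_mulVec_sumElim {sC sG sH nd nz ny : ℕ} (C : Matrix (Fin sC) (Fin nd) ℝ)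
    (G : Matrix (Fin sG) (Fin nd ⊕ Fin nz) ℝ) (H : Matrix (Fin sH) (Fin nz ⊕ Fin ny) ℝ)
    (d : Fin nd → ℝ) (z : Fin nz → ℝ) (y : Fin ny → ℝ) :
    Stack3 C G H *ᵥ Sum.elim d (Sum.elim z y) =
      Sum.elim (C *ᵥ d) (Sum.elim (G *ᵥ Sum.elim d z) (H *ᵥ Sum.elim z y)) := by
  ext (i | i | i) <;> simp [Stack3, mulVec, dotProduct, Fintype.sum_sum_type]

theorem stack2_mulVec_add_mulVec_le_iff {sC sG nd nz : ℕ}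
    {C1 C0 : Matrix (Fin sC) (Fin nd) ℝ} {G1 G0 : Matrix (Fin sG) (Fin nd ⊕ Fin nz) ℝ}
    {c0 : Fin sC → ℝ} {g0 : Fin sG → ℝ} {d0 d1 : Fin nd → ℝ} {z0 z1 : Fin nz → ℝ} :
    Stack2 C1 G1 *ᵥ Sum.elim d1 z1 + Stack2 C0 G0 *ᵥ Sum.elim d0 z0 ≤ Sum.elim c0 g0 ↔
      C1 *ᵥ d1 + C0 *ᵥ d0 ≤ c0 ∧ G1 *ᵥ Sum.elim d1 z1 + G0 *ᵥ Sum.elim d0 z0 ≤ g0 := by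
  rw [stack2_mulVec_sumElim, stack2_mulVec_sumElim, ← Sum.elim_add_add, Sum.elim_le_elim_iff]

theorem stack3_mulVec_add_mulVec_le_iff {sC sG sH nd nz ny : ℕ}
    {C1 C0 : Matrix (Fin sC) (Fin nd) ℝ} {G1 G0 : Matrix (Fin sG) (Fin nd ⊕ Fin nz) ℝ}
    {H1 H0 : Matrix (Fin sH) (Fin nz ⊕ Fin ny) ℝ} {c0 : Fin sC → ℝ} {g0 : Fin sG → ℝ}
    {h0 : Fin sH → ℝ} {d0 d1 : Fin nd → ℝ} {z0 z1 : Fin nz → ℝ} {y0 y1 : Fin ny → ℝ} :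
    Stack3 C1 G1 H1 *ᵥ Sum.elim d1 (Sum.elim z1 y1) +
        Stack3 C0 G0 H0 *ᵥ Sum.elim d0 (Sum.elim z0 y0) ≤ Sum.elim c0 (Sum.elim g0 h0) ↔
      C1 *ᵥ d1 + C0 *ᵥ d0 ≤ c0 ∧ G1 *ᵥ Sum.elim d1 z1 + G0 *ᵥ Sum.elim d0 z0 ≤ g0 ∧
        H1 *ᵥ Sum.elim z1 y1 + H0 *ᵥ Sum.elim z0 y0 ≤ h0 := by
  rw [stack3_mulVec_sumElim, stack3_mulVec_sumElim, ← Sum.elim_add_add, ← Sum.elim_add_add,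
    Sum.elim_le_elim_iff, Sum.elim_le_elim_iff]

theorem subset_compD_iff {nd nz : ℕ} {D D1 : Set (Sig nd)} {Ω1 : Set (Sig nd × Sig nz)}
    {D2 : Set (Sig nz)} :
    D ⊆ CompD D1 Ω1 D2 ↔ D ⊆ D1 ∧ ∀ d ∈ D, ∀ z, (d, z) ∈ Ω1 → z ∈ D2 :=
  ⟨fun h => ⟨fun _ hd => (h hd).1, fun _ hd => (h hd).2⟩, fun h _ hd => ⟨h.1 hd, h.2 _ hd⟩⟩

theorem compΩ_inter_subset_inter_iff {nd nz ny : ℕ} {D : Set (Sig nd)}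
    {Ω1 : Set (Sig nd × Sig nz)} {Ω2 : Set (Sig nz × Sig ny)} {Ω : Set (Sig nd × Sig ny)} :
    CompΩ Ω1 Ω2 ∩ (D ×ˢ Set.univ) ⊆ Ω ∩ (D ×ˢ Set.univ) ↔
      ∀ d ∈ D, ∀ z y, (d, z) ∈ Ω1 → (z, y) ∈ Ω2 → (d, y) ∈ Ω := by
  refine ⟨fun h d hd z y hz hy => (h ⟨⟨z, hz, hy⟩, hd, trivial⟩).1, ?_⟩
  rintro h ⟨d, y⟩ ⟨⟨z, hz, hy⟩, hd, -⟩
  exact ⟨h d hd z y hz hy, hd, trivial⟩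

section LinearContract

variable {nd nz ny sA sG sB sH sC sJ : ℕ}
  {A1 A0 : Matrix (Fin sA) (Fin nd) ℝ} {a0 : Fin sA → ℝ}
  {G1 G0 : Matrix (Fin sG) (Fin nd ⊕ Fin nz) ℝ} {g0 : Fin sG → ℝ}
  {B1 B0 : Matrix (Fin sB) (Fin nz) ℝ} {b0 : Fin sB → ℝ}
  {H1 H0 : Matrix (Fin sH) (Fin nz ⊕ Fin ny) ℝ} {h0 : Fin sH → ℝ}
  {C1 C0 : Matrix (Fin sC) (Fin nd) ℝ} {c0 : Fin sC → ℝ}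
  {J1 J0 : Matrix (Fin sJ) (Fin nd ⊕ Fin ny) ℝ} {j0 : Fin sJ → ℝ}

theorem linAssump_subset_linAssump_iff (hext : Extendable C1 C0 c0) :
    LinAssump C1 C0 c0 ⊆ LinAssump A1 A0 a0 ↔
      ∀ d0 d1 : Fin nd → ℝ, C1 *ᵥ d1 + C0 *ᵥ d0 ≤ c0 → A1 *ᵥ d1 + A0 *ᵥ d0 ≤ a0 :=
  forall_seq_rel_imp_iff (Q := fun d0 d1 => A1 *ᵥ d1 + A0 *ᵥ d0 ≤ a0) hext

theorem forall_linGuar_imp_linAssump_iff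
    (hext : Extendable (Stack2 C1 G1) (Stack2 C0 G0) (Sum.elim c0 g0)) :
    (∀ d ∈ LinAssump C1 C0 c0, ∀ z, (d, z) ∈ LinGuar G1 G0 g0 → z ∈ LinAssump B1 B0 b0) ↔
      ∀ (d0 d1 : Fin nd → ℝ) (z0 z1 : Fin nz → ℝ), C1 *ᵥ d1 + C0 *ᵥ d0 ≤ c0 →
        G1 *ᵥ Sum.elim d1 z1 + G0 *ᵥ Sum.elim d0 z0 ≤ g0 → B1 *ᵥ z1 + B0 *ᵥ z0 ≤ b0 := by
  let P : (Fin nd → ℝ) × (Fin nz → ℝ) → (Fin nd → ℝ) × (Fin nz → ℝ) → Prop := fun p q =>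
    C1 *ᵥ q.1 + C0 *ᵥ p.1 ≤ c0 ∧ G1 *ᵥ Sum.elim q.1 q.2 + G0 *ᵥ Sum.elim p.1 p.2 ≤ g0
  have hP : ∀ p q, P p q → ∃ r, P q r := by
    rintro ⟨d0, z0⟩ ⟨d1, z1⟩ h
    obtain ⟨u, hu⟩ := hext _ _ (stack2_mulVec_add_mulVec_le_iff.2 h)
    rw [← Sum.elim_comp_inl_inr u, stack2_mulVec_add_mulVec_le_iff] at hu
    exact ⟨(u ∘ Sum.inl, u ∘ Sum.inr), hu⟩
  have key := forall_seq_rel_imp_iff (Q := fun p q => B1 *ᵥ q.2 + B0 *ᵥ p.2 ≤ b0) hP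
  constructor
  · intro h d0 d1 z0 z1 hd hz
    exact key.1 (fun w hw => h (fun k => (w k).1) (fun k => (hw k).1) (fun k => (w k).2)
      (fun k => (hw k).2)) (d0, z0) (d1, z1) ⟨hd, hz⟩
  · intro h d hd z hz
    exact key.2 (fun p q hpq => h _ _ _ _ hpq.1 hpq.2) (fun k => (d k, z k))
      (fun k => ⟨hd k, hz k⟩)

theorem forall_linGuar_comp_imp_linGuar_iff
    (hext : Extendable (Stack3 C1 G1 H1) (Stack3 C0 G0 H0) (Sum.elim c0 (Sum.elim g0 h0))) :
    (∀ d ∈ LinAssump C1 C0 c0, ∀ z y, (d, z) ∈ LinGuar G1 G0 g0 → (z, y) ∈ LinGuar H1 H0 h0 →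
        (d, y) ∈ LinGuar J1 J0 j0) ↔
      ∀ (d0 d1 : Fin nd → ℝ) (z0 z1 : Fin nz → ℝ) (y0 y1 : Fin ny → ℝ),
        C1 *ᵥ d1 + C0 *ᵥ d0 ≤ c0 → G1 *ᵥ Sum.elim d1 z1 + G0 *ᵥ Sum.elim d0 z0 ≤ g0 →
        H1 *ᵥ Sum.elim z1 y1 + H0 *ᵥ Sum.elim z0 y0 ≤ h0 →
        J1 *ᵥ Sum.elim d1 y1 + J0 *ᵥ Sum.elim d0 y0 ≤ j0 := by
  let P : (Fin nd → ℝ) × (Fin nz → ℝ) × (Fin ny → ℝ) →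
      (Fin nd → ℝ) × (Fin nz → ℝ) × (Fin ny → ℝ) → Prop := fun p q =>
    C1 *ᵥ q.1 + C0 *ᵥ p.1 ≤ c0 ∧ G1 *ᵥ Sum.elim q.1 q.2.1 + G0 *ᵥ Sum.elim p.1 p.2.1 ≤ g0 ∧
      H1 *ᵥ Sum.elim q.2.1 q.2.2 + H0 *ᵥ Sum.elim p.2.1 p.2.2 ≤ h0
  have hP : ∀ p q, P p q → ∃ r, P q r := by
    rintro ⟨d0, z0, y0⟩ ⟨d1, z1, y1⟩ h
    obtain ⟨u, hu⟩ := hext _ _ (stack3_mulVec_add_mulVec_le_iff.2 h)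
    rw [← Sum.elim_comp_inl_inr u, ← Sum.elim_comp_inl_inr (u ∘ Sum.inr),
      stack3_mulVec_add_mulVec_le_iff] at hu
    exact ⟨(u ∘ Sum.inl, u ∘ Sum.inr ∘ Sum.inl, u ∘ Sum.inr ∘ Sum.inr), hu⟩
  have key := forall_seq_rel_imp_iff
    (Q := fun p q => J1 *ᵥ Sum.elim q.1 q.2.2 + J0 *ᵥ Sum.elim p.1 p.2.2 ≤ j0) hP
  constructor
  · intro h d0 d1 z0 z1 y0 y1 hd hz hy
    exact key.1 (fun w hw => h (fun k => (w k).1) (fun k => (hw k).1) (fun k => (w k).2.1)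
      (fun k => (w k).2.2) (fun k => (hw k).2.1) (fun k => (hw k).2.2))
      (d0, z0, y0) (d1, z1, y1) ⟨hd, hz, hy⟩
  · intro h d hd z y hz hy
    exact key.2 (fun p q hpq => h _ _ _ _ _ _ hpq.1 hpq.2.1 hpq.2.2) (fun k => (d k, z k, y k))
      (fun k => ⟨hd k, hz k, hy k⟩)

end LinearContract

/-- Proposition 3 (optimization-based characterization): under the extendability
assumptions, `C1 ⊗ C2 ≼ C` holds iff the three families of row-wise (LP) conditions
`e_jᵀ(⋯) ≤ 0` all hold. -/
theorem compositional_refinement_iff_rowwise {nd nz ny sA sG sB sH sC sJ : ℕ}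
    (A1 A0 : Matrix (Fin sA) (Fin nd) ℝ) (a0 : Fin sA → ℝ)
    (G1 G0 : Matrix (Fin sG) (Fin nd ⊕ Fin nz) ℝ) (g0 : Fin sG → ℝ)
    (B1 B0 : Matrix (Fin sB) (Fin nz) ℝ) (b0 : Fin sB → ℝ)
    (H1 H0 : Matrix (Fin sH) (Fin nz ⊕ Fin ny) ℝ) (h0 : Fin sH → ℝ)
    (Cc1 Cc0 : Matrix (Fin sC) (Fin nd) ℝ) (c0 : Fin sC → ℝ)
    (J1 J0 : Matrix (Fin sJ) (Fin nd ⊕ Fin ny) ℝ) (j0 : Fin sJ → ℝ)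
    (hext1 : Extendable Cc1 Cc0 c0)
    (hext2 : Extendable (Stack2 Cc1 G1) (Stack2 Cc0 G0) (Sum.elim c0 g0))
    (hext3 : Extendable (Stack3 Cc1 G1 H1) (Stack3 Cc0 G0 H0)
      (Sum.elim c0 (Sum.elim g0 h0))) :
    (LinAssump Cc1 Cc0 c0 ⊆
        CompD (LinAssump A1 A0 a0) (LinGuar G1 G0 g0) (LinAssump B1 B0 b0) ∧
      CompΩ (LinGuar G1 G0 g0) (LinGuar H1 H0 h0)
          ∩ (LinAssump Cc1 Cc0 c0 ×ˢ (Set.univ : Set (Sig ny))) ⊆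
        LinGuar J1 J0 j0 ∩ (LinAssump Cc1 Cc0 c0 ×ˢ (Set.univ : Set (Sig ny)))) ↔
    ((∀ d0 d1 : Fin nd → ℝ, Cc1 *ᵥ d1 + Cc0 *ᵥ d0 ≤ c0 →
        ∀ j : Fin sA, Pi.single j (1 : ℝ) ⬝ᵥ (A1 *ᵥ d1 + A0 *ᵥ d0 - a0) ≤ 0) ∧
     (∀ (d0 d1 : Fin nd → ℝ) (z0 z1 : Fin nz → ℝ),
        Cc1 *ᵥ d1 + Cc0 *ᵥ d0 ≤ c0 →
        G1 *ᵥ Sum.elim d1 z1 + G0 *ᵥ Sum.elim d0 z0 ≤ g0 →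
        ∀ j : Fin sB, Pi.single j (1 : ℝ) ⬝ᵥ (B1 *ᵥ z1 + B0 *ᵥ z0 - b0) ≤ 0) ∧
     (∀ (d0 d1 : Fin nd → ℝ) (z0 z1 : Fin nz → ℝ) (y0 y1 : Fin ny → ℝ),
        Cc1 *ᵥ d1 + Cc0 *ᵥ d0 ≤ c0 →
        G1 *ᵥ Sum.elim d1 z1 + G0 *ᵥ Sum.elim d0 z0 ≤ g0 →
        H1 *ᵥ Sum.elim z1 y1 + H0 *ᵥ Sum.elim z0 y0 ≤ h0 →
        ∀ j : Fin sJ,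
          Pi.single j (1 : ℝ) ⬝ᵥ (J1 *ᵥ Sum.elim d1 y1 + J0 *ᵥ Sum.elim d0 y0 - j0) ≤ 0)) := by
  simp only [forall_single_one_dotProduct_sub_nonpos_iff]
  rw [subset_compD_iff, compΩ_inter_subset_inter_iff, linAssump_subset_linAssump_iff hext1,
    forall_linGuar_imp_linAssump_iff hext2, forall_linGuar_comp_imp_linGuar_iff hext3, and_assoc]
end

section
/- One-step headway invariance of the affine follower controller (case study): let h > 0, Δt > 0, τ ≥ 0, ξ_down ≥ 0, δ_p ≥ 0 be real parameters and set λ = ξ_down + δ_p. Suppose p_m, v_m, p_f, v_f, p_m⁺, p_f⁺, v_f⁺, a_f ∈ ℝ satisfy: (measurement assumption) p_m⁺ − p_m − Δt·v_m ≥ −τ·v_m − ξ_down; (follower dynamics) p_f⁺ = p_f + Δt·v_f and v_f⁺ = v_f + Δt·a_f with a_f = (p_m − p_f − h·v_f)/(h·Δt) + ((Δt − τ)·v_m)/(h·Δt) − v_f/h − λ/(h·Δt). Then p_m⁺ − p_f⁺ − h·v_f⁺ ≥ δ_p. -/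
/-!
The affine control law is deadbeat for the headway: it cancels the follower's own state, so the
next headway equals `p_m⁺ − p_m − (Δt − τ)·v_m + λ` exactly. The measurement assumption bounds the
leader's displacement term below by `−ξ_down`, and `λ = ξ_down + δ_p` leaves the margin `δ_p`.
-/

theorem next_headway_eq_of_affine_control {h Δt τ lam pm vm pf vf pmp af : ℝ}
    (hh : h ≠ 0) (hΔt : Δt ≠ 0)
    (haf : af = (pm - pf - h * vf) / (h * Δt) + ((Δt - τ) * vm) / (h * Δt)
      - vf / h - lam / (h * Δt)) :
    pmp - (pf + Δt * vf) - h * (vf + Δt * af) = pmp - pm - (Δt - τ) * vm + lam := by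
  subst haf
  field_simp
  ring

theorem headway_one_step_invariance_general
    (h Δt τ ξdown δp pm vm pf vf pmp pfp vfp af : ℝ)
    (hh : 0 < h) (hΔt : 0 < Δt)
    (hmeas : pmp - pm - Δt * vm ≥ -(τ * vm) - ξdown)
    (hpf : pfp = pf + Δt * vf)
    (hvf : vfp = vf + Δt * af)
    (haf : af = (pm - pf - h * vf) / (h * Δt) + ((Δt - τ) * vm) / (h * Δt)
      - vf / h - (ξdown + δp) / (h * Δt)) :
    pmp - pfp - h * vfp ≥ δp := by
  rw [hpf, hvf, next_headway_eq_of_affine_control hh.ne' hΔt.ne' haf]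
  linarith

/-- One-step headway invariance of the affine follower controller (case study): under
the measurement assumption and the double-integrator follower dynamics with the affine
control law (with `λ = ξ_down + δ_p`), the robustified headway guarantee
`p_m⁺ − p_f⁺ − h·v_f⁺ ≥ δ_p` holds at the next time step. -/
theorem headway_one_step_invariance
    (h Δt τ ξdown δp pm vm pf vf pmp pfp vfp af : ℝ)
    (hh : 0 < h) (hΔt : 0 < Δt) (hτ : 0 ≤ τ) (hξ : 0 ≤ ξdown) (hδp : 0 ≤ δp)
    (hmeas : pmp - pm - Δt * vm ≥ -(τ * vm) - ξdown)
    (hpf : pfp = pf + Δt * vf)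
    (hvf : vfp = vf + Δt * af)
    (haf : af = (pm - pf - h * vf) / (h * Δt) + ((Δt - τ) * vm) / (h * Δt)
      - vf / h - (ξdown + δp) / (h * Δt)) :
    pmp - pfp - h * vfp ≥ δp :=
  headway_one_step_invariance_general h Δt τ ξdown δp pm vm pf vf pmp pfp vfp af hh hΔt hmeas hpf
    hvf haf
end
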